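/- For any odd positive integer n ≥ 3, the 2-adic valuation of C(2n−2, n−2) equals s₂(n) − 1 + ν(n−1); in particular, since n−1 is even, ν(C(2n−2, n−2)) ≥ s₂(n). -/

import Mathlib

/-- binary digit sum -/
def s2 (n : ℕ) : ℕ := (Nat.digits 2 n).sum

/-- 2-adic valuation -/
def nu (n : ℕ) : ℕ := padicValNat 2 n

/-!
Kummer's theorem gives `ν C(2n-2, n-2) = s₂(n-2) + s₂(n) - s₂(2n-2)`. Write `n = 2q + 1`. Doubling does
not change the digit sum, so `s₂(2n-2) = s₂(2q)`, and appending the digit `1` gives `s₂(n) = s₂(2q) + 1`.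
Finally, subtracting one from `2q` turns its `ν(2q)` trailing zeros into ones and clears one digit,
so `s₂(2q-1) + 1 = s₂(2q) + ν(2q)`; this last identity follows from Legendre's formula
`ν(m!) = m - s₂(m)` applied to `m! = m (m-1)!`.
-/

open Nat

lemma s2_two_mul (q : ℕ) : s2 (2 * q) = s2 q := by
  rcases q.eq_zero_or_pos with rfl | hq
  · rfl
  · simp [s2, Nat.digits_base_mul one_lt_two hq]

lemma s2_two_mul_add_one (q : ℕ) : s2 (2 * q + 1) = s2 q + 1 := by
  rw [s2, add_comm, Nat.digits_add 2 one_lt_two 1 q one_lt_two (Or.inl one_ne_zero)]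
  simp [s2, add_comm]

lemma nu_factorial (m : ℕ) : nu m ! = m - s2 m := by
  simpa [nu, s2] using sub_one_mul_padicValNat_factorial (p := 2) m

lemma s2_sub_one_add_one {m : ℕ} (hm : 0 < m) : s2 (m - 1) + 1 = s2 m + nu m := by
  have hfact : nu m ! = nu m + nu (m - 1)! := by
    rw [← Nat.mul_factorial_pred hm.ne']
    exact padicValNat.mul hm.ne' (factorial_ne_zero _)
  have hle : s2 m ≤ m := Nat.digit_sum_le 2 m
  have hle' : s2 (m - 1) ≤ m - 1 := Nat.digit_sum_le 2 (m - 1)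
  rw [nu_factorial, nu_factorial] at hfact
  omega

lemma nu_choose {n k : ℕ} (h : k ≤ n) : nu (n.choose k) = s2 k + s2 (n - k) - s2 n := by
  simpa [nu, s2] using sub_one_mul_padicValNat_choose_eq_sub_sum_digits (p := 2) h

theorem stmt11 (n : ℕ) (hn : 3 ≤ n) (hodd : Odd n) :
    nu (Nat.choose (2 * n - 2) (n - 2)) = s2 n - 1 + nu (n - 1) ∧
    s2 n ≤ nu (Nat.choose (2 * n - 2) (n - 2)) := by
  obtain ⟨q, rfl⟩ := hodd
  have hkummer : nu ((2 * (2 * q + 1) - 2).choose (2 * q + 1 - 2))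
      = s2 (2 * q - 1) + s2 (2 * q + 1) - s2 (2 * q) := by
    rw [nu_choose (by omega), show 2 * (2 * q + 1) - 2 = 2 * (2 * q) by omega, s2_two_mul,
      show 2 * (2 * q) - (2 * q + 1 - 2) = 2 * q + 1 by omega, show 2 * q + 1 - 2 = 2 * q - 1 by omega]
  have hs2_odd : s2 (2 * q + 1) = s2 (2 * q) + 1 := by rw [s2_two_mul_add_one, s2_two_mul]
  have hcarry := s2_sub_one_add_one (m := 2 * q) (by omega)
  have heven : 1 ≤ nu (2 * q) := one_le_padicValNat_of_dvd (by omega) (dvd_mul_right 2 q)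
  rw [hkummer, show 2 * q + 1 - 1 = 2 * q by omega]
  omega
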